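/- arXiv:1807.02899 — 2 statements merged into one kernel-verified Lean document; each statement's English description precedes it below -/
import Mathlib

section
/- Let G be a connected (n, m) graph with m > n ≥ 4. Then the spread of G is at most the spread of its line graph: S(G) ≤ S_L(G), with equality if and only if G is a regular bipartite graph. -/
open Matrix Polynomial BigOperators

noncomputable section

namespace SpreadPaper

variable {V : Type*}

/-- The adjacency matrix of a simple graph over `ℝ` (classical decidability). -/
noncomputable def adjMat (G : SimpleGraph V) : Matrix V V ℝ :=
  letI := Classical.decRel G.Adj
  G.adjMatrix ℝ

lemma adjMat_isHermitian (G : SimpleGraph V) : (adjMat G).IsHermitian := by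
  letI := Classical.decRel G.Adj
  ext i j
  simp [adjMat, Matrix.conjTranspose_apply, SimpleGraph.adjMatrix_apply, G.adj_comm]

/-- The degree of a vertex (classical decidability). -/
noncomputable def deg [Fintype V] (G : SimpleGraph V) (v : V) : ℕ :=
  letI := Classical.decRel G.Adj
  G.degree v

/-- The signless Laplacian matrix `D + A` of a graph. -/
noncomputable def signQ [Fintype V] [DecidableEq V] (G : SimpleGraph V) : Matrix V V ℝ :=
  Matrix.diagonal (fun v => (deg G v : ℝ)) + adjMat G

lemma signQ_isHermitian [Fintype V] [DecidableEq V] (G : SimpleGraph V) :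
    (signQ G).IsHermitian :=
  (Matrix.isHermitian_diagonal _).add (adjMat_isHermitian G)

/-- The Laplacian matrix `D - A` of a graph. -/
noncomputable def lap [Fintype V] [DecidableEq V] (G : SimpleGraph V) : Matrix V V ℝ :=
  Matrix.diagonal (fun v => (deg G v : ℝ)) - adjMat G

lemma lap_isHermitian [Fintype V] [DecidableEq V] (G : SimpleGraph V) :
    (lap G).IsHermitian :=
  (Matrix.isHermitian_diagonal _).sub (adjMat_isHermitian G)

/-- The largest eigenvalue of a Hermitian real matrix. -/
noncomputable def maxEig {m : Type*} [Fintype m] [DecidableEq m] {A : Matrix m m ℝ}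
    (hA : A.IsHermitian) : ℝ :=
  ⨆ i, hA.eigenvalues i

/-- The smallest eigenvalue of a Hermitian real matrix. -/
noncomputable def minEig {m : Type*} [Fintype m] [DecidableEq m] {A : Matrix m m ℝ}
    (hA : A.IsHermitian) : ℝ :=
  ⨅ i, hA.eigenvalues i

/-- The spread (largest minus smallest eigenvalue) of a Hermitian real matrix. -/
noncomputable def sprd {m : Type*} [Fintype m] [DecidableEq m] {A : Matrix m m ℝ}
    (hA : A.IsHermitian) : ℝ :=
  maxEig hA - minEig hA

/-- `q` lists the eigenvalues of the Hermitian matrix `A` (with multiplicity) in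
nonincreasing order. -/
def IsDescSpectrum {m : Type*} [Fintype m] [DecidableEq m] {A : Matrix m m ℝ}
    (hA : A.IsHermitian) {k : ℕ} (q : Fin k → ℝ) : Prop :=
  Antitone q ∧ ∃ e : Fin k ≃ m, ∀ i, q i = hA.eigenvalues (e i)

noncomputable instance edgeSetFintype [Fintype V] (G : SimpleGraph V) : Fintype G.edgeSet :=
  Set.Finite.fintype (Set.toFinite _)

/-- The number of edges of a graph. -/
noncomputable def numEdges (G : SimpleGraph V) : ℕ := Nat.card G.edgeSet

/-- The total graph of `G`: vertices are the vertices and edges of `G`, with adjacency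
given by adjacency in `G`, adjacency in the line graph, or vertex-edge incidence. -/
def totalGraph (G : SimpleGraph V) : SimpleGraph (V ⊕ G.edgeSet) where
  Adj x y :=
    match x, y with
    | Sum.inl u, Sum.inl v => G.Adj u v
    | Sum.inl u, Sum.inr e => u ∈ (e : Sym2 V)
    | Sum.inr e, Sum.inl u => u ∈ (e : Sym2 V)
    | Sum.inr e, Sum.inr f => e ≠ f ∧ ∃ v, v ∈ (e : Sym2 V) ∧ v ∈ (f : Sym2 V)
  symm := by
    constructor
    rintro (u|e) (v|f) h
    · exact G.symm.symm _ _ h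
    · exact h
    · exact h
    · exact ⟨h.1.symm, h.2.choose, h.2.choose_spec.2, h.2.choose_spec.1⟩
  loopless := by
    constructor
    rintro (u|e) h
    · exact G.loopless.irrefl u h
    · exact h.1 rfl

/-- The join `G ∨ H` of two graphs: all edges between the two vertex sets are added. -/
def joinG {α β : Type*} (G : SimpleGraph α) (H : SimpleGraph β) : SimpleGraph (α ⊕ β) where
  Adj x y :=
    match x, y with
    | Sum.inl a, Sum.inl b => G.Adj a b
    | Sum.inr a, Sum.inr b => H.Adj a b
    | Sum.inl _, Sum.inr _ => True
    | Sum.inr _, Sum.inl _ => True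
  symm := by
    constructor
    rintro (a|a) (b|b) h
    · exact G.symm.symm _ _ h
    · exact trivial
    · exact trivial
    · exact H.symm.symm _ _ h
  loopless := by
    constructor
    rintro (a|a) h
    · exact G.loopless.irrefl a h
    · exact H.loopless.irrefl a h

/-- The disjoint union of two graphs. -/
def dunion {α β : Type*} (G : SimpleGraph α) (H : SimpleGraph β) : SimpleGraph (α ⊕ β) where
  Adj x y :=
    match x, y with
    | Sum.inl a, Sum.inl b => G.Adj a b
    | Sum.inr a, Sum.inr b => H.Adj a b
    | Sum.inl _, Sum.inr _ => False
    | Sum.inr _, Sum.inl _ => False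
  symm := by
    constructor
    rintro (a|a) (b|b) h
    · exact G.symm.symm _ _ h
    · exact h.elim
    · exact h.elim
    · exact H.symm.symm _ _ h
  loopless := by
    constructor
    rintro (a|a) h
    · exact G.loopless.irrefl a h
    · exact H.loopless.irrefl a h

/-- `G` is `r`-regular. -/
def IsReg [Fintype V] (G : SimpleGraph V) (r : ℕ) : Prop := ∀ v, deg G v = r

/-- The minimum degree of a graph. -/
noncomputable def minDeg [Fintype V] (G : SimpleGraph V) : ℕ := sInf (Set.range (deg G))

/-- The maximum degree of a graph. -/
noncomputable def maxDeg [Fintype V] (G : SimpleGraph V) : ℕ := sSup (Set.range (deg G))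

/-- The first Zagreb index of a graph: the sum of the squares of the vertex degrees. -/
noncomputable def zagreb [Fintype V] (G : SimpleGraph V) : ℕ := ∑ v, (deg G v) ^ 2

/-- The vertex connectivity of `G` is at most `k`: some set of at most `k` vertices
disconnects `G`. -/
def HasConnLe (G : SimpleGraph V) (k : ℕ) : Prop :=
  ∃ U : Set V, Nat.card U ≤ k ∧ (Uᶜ).Nonempty ∧ ¬ (G.induce Uᶜ).Preconnected

/-!
Let `B` be the vertex-edge incidence matrix. Then `B Bᵀ = D + A` is the signless Laplacian `Q`
and `Bᵀ B = A(L(G)) + 2I`. The two Gram matrices share their largest eigenvalue `q₁`, and `Bᵀ B`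
is singular when `m > n`, so `S_L(G) = (q₁ - 2) - (-2) = q₁`. On the other side, `-λₙ ≤ λ₁`
since `A` is entrywise nonnegative (pass from `x` to `|x|`), and `2λ₁ ≤ q₁` since `Q = L + 2A`
with the Laplacian `L` positive semidefinite; hence `S(G) ≤ 2λ₁ ≤ q₁`.

In the equality case a `λ₁`-eigenvector `x` has `xᵀ L x = 0`, so it is constant on the connected
graph `G`, and then every degree equals `λ₁`. For a `λₙ`-eigenvector `y`, the vector `|y|` is also
a Rayleigh maximiser, hence constant, so `y` vanishes nowhere; as `yᵀ A y = -|y|ᵀ A |y|`, `y`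
changes sign along every edge, which 2-colours `G`. Conversely an `r`-regular bipartite graph has
`λ₁ ≥ r`, `λₙ ≤ -r` and `q₁ ≤ 2r`.
-/

lemma dotProduct_self_pos {ι : Type*} [Fintype ι] {x : ι → ℝ} (hx : x ≠ 0) : 0 < x ⬝ᵥ x :=
  lt_of_le_of_ne (by simpa using dotProduct_star_self_nonneg x)
    (Ne.symm (dotProduct_self_eq_zero.not.mpr hx))

section Spectral

variable {ι : Type*} [Fintype ι] [DecidableEq ι] {A : Matrix ι ι ℝ}

lemma posSemidef_smul_one_sub (hA : A.IsHermitian) {c : ℝ} (hc : ∀ i, hA.eigenvalues i ≤ c) :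
    (c • 1 - A).PosSemidef := by
  have h : c • (1 : Matrix ι ι ℝ) - A = Unitary.conjStarAlgAut ℝ _ hA.eigenvectorUnitary
      (diagonal fun i => c - hA.eigenvalues i) := by
    conv_lhs => rw [hA.spectral_theorem]
    rw [← map_one (Unitary.conjStarAlgAut ℝ _ hA.eigenvectorUnitary), ← map_smul, ← map_sub,
      smul_one_eq_diagonal, diagonal_sub]
    rfl
  rw [h, Unitary.conjStarAlgAut_apply]
  exact (PosSemidef.diagonal fun i => sub_nonneg.mpr (hc i)).mul_mul_conjTranspose_same _

lemma posSemidef_sub_smul_one (hA : A.IsHermitian) {c : ℝ} (hc : ∀ i, c ≤ hA.eigenvalues i) :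
    (A - c • 1).PosSemidef := by
  have h : A - c • (1 : Matrix ι ι ℝ) = Unitary.conjStarAlgAut ℝ _ hA.eigenvectorUnitary
      (diagonal fun i => hA.eigenvalues i - c) := by
    conv_lhs => rw [hA.spectral_theorem]
    rw [← map_one (Unitary.conjStarAlgAut ℝ _ hA.eigenvectorUnitary), ← map_smul, ← map_sub,
      smul_one_eq_diagonal, diagonal_sub]
    rfl
  rw [h, Unitary.conjStarAlgAut_apply]
  exact (PosSemidef.diagonal fun i => sub_nonneg.mpr (hc i)).mul_mul_conjTranspose_same _

lemma eigenvalues_le_maxEig (hA : A.IsHermitian) (i : ι) : hA.eigenvalues i ≤ maxEig hA :=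
  le_ciSup (Set.finite_range _).bddAbove i

lemma minEig_le_eigenvalues (hA : A.IsHermitian) (i : ι) : minEig hA ≤ hA.eigenvalues i :=
  ciInf_le (Set.finite_range _).bddBelow i

lemma dotProduct_mulVec_le_maxEig (hA : A.IsHermitian) (x : ι → ℝ) :
    x ⬝ᵥ (A *ᵥ x) ≤ maxEig hA * (x ⬝ᵥ x) := by
  have h := (posSemidef_smul_one_sub hA (eigenvalues_le_maxEig hA)).dotProduct_mulVec_nonneg x
  rw [star_trivial, sub_mulVec, smul_mulVec, one_mulVec, dotProduct_sub, dotProduct_smul,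
    smul_eq_mul] at h
  linarith

lemma minEig_le_dotProduct_mulVec (hA : A.IsHermitian) (x : ι → ℝ) :
    minEig hA * (x ⬝ᵥ x) ≤ x ⬝ᵥ (A *ᵥ x) := by
  have h := (posSemidef_sub_smul_one hA (minEig_le_eigenvalues hA)).dotProduct_mulVec_nonneg x
  rw [star_trivial, sub_mulVec, smul_mulVec, one_mulVec, dotProduct_sub, dotProduct_smul,
    smul_eq_mul] at h
  linarith

lemma le_maxEig_of_mulVec_eq_smul (hA : A.IsHermitian) {x : ι → ℝ} {μ : ℝ} (hx : x ≠ 0)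
    (h : A *ᵥ x = μ • x) : μ ≤ maxEig hA := by
  have h' := dotProduct_mulVec_le_maxEig hA x
  rw [h, dotProduct_smul, smul_eq_mul] at h'
  exact le_of_mul_le_mul_right h' (dotProduct_self_pos hx)

lemma minEig_le_of_mulVec_eq_smul (hA : A.IsHermitian) {x : ι → ℝ} {μ : ℝ} (hx : x ≠ 0)
    (h : A *ᵥ x = μ • x) : minEig hA ≤ μ := by
  have h' := minEig_le_dotProduct_mulVec hA x
  rw [h, dotProduct_smul, smul_eq_mul] at h'
  exact le_of_mul_le_mul_right h' (dotProduct_self_pos hx)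

lemma eigenvectorBasis_ne_zero (hA : A.IsHermitian) (i : ι) : ⇑(hA.eigenvectorBasis i) ≠ 0 := by
  have := hA.eigenvectorBasis.orthonormal.ne_zero i
  contrapose! this
  ext j
  exact congrFun this j

variable [Nonempty ι]

lemma exists_mulVec_eq_maxEig_smul (hA : A.IsHermitian) :
    ∃ x : ι → ℝ, x ≠ 0 ∧ A *ᵥ x = maxEig hA • x := by
  obtain ⟨i, hi⟩ := exists_eq_ciSup_of_finite (f := hA.eigenvalues)
  exact ⟨_, eigenvectorBasis_ne_zero hA i, by rw [hA.mulVec_eigenvectorBasis, hi]; rfl⟩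

lemma exists_mulVec_eq_minEig_smul (hA : A.IsHermitian) :
    ∃ x : ι → ℝ, x ≠ 0 ∧ A *ᵥ x = minEig hA • x := by
  obtain ⟨i, hi⟩ := exists_eq_ciInf_of_finite (f := hA.eigenvalues)
  exact ⟨_, eigenvectorBasis_ne_zero hA i, by rw [hA.mulVec_eigenvectorBasis, hi]; rfl⟩

lemma maxEig_le_of_forall_dotProduct_mulVec_le (hA : A.IsHermitian) {c : ℝ}
    (h : ∀ x, x ⬝ᵥ (A *ᵥ x) ≤ c * (x ⬝ᵥ x)) : maxEig hA ≤ c := by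
  obtain ⟨x, hx, hAx⟩ := exists_mulVec_eq_maxEig_smul hA
  have h' := h x
  rw [hAx, dotProduct_smul, smul_eq_mul] at h'
  exact le_of_mul_le_mul_right h' (dotProduct_self_pos hx)

lemma le_minEig_of_forall_le_dotProduct_mulVec (hA : A.IsHermitian) {c : ℝ}
    (h : ∀ x, c * (x ⬝ᵥ x) ≤ x ⬝ᵥ (A *ᵥ x)) : c ≤ minEig hA := by
  obtain ⟨x, hx, hAx⟩ := exists_mulVec_eq_minEig_smul hA
  have h' := h x
  rw [hAx, dotProduct_smul, smul_eq_mul] at h'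
  exact le_of_mul_le_mul_right h' (dotProduct_self_pos hx)

lemma sprd_eq_of_eq_add_smul_one {M : Matrix ι ι ℝ} (hA : A.IsHermitian) (hM : M.IsHermitian)
    {c : ℝ} (h : M = A + c • 1) : sprd hM = sprd hA := by
  have quad : ∀ x, x ⬝ᵥ (M *ᵥ x) = x ⬝ᵥ (A *ᵥ x) + c * (x ⬝ᵥ x) := fun x => by
    rw [h, add_mulVec, smul_mulVec, one_mulVec, dotProduct_add, dotProduct_smul, smul_eq_mul]
  have hmax_le : maxEig hM ≤ maxEig hA + c :=
    maxEig_le_of_forall_dotProduct_mulVec_le hM fun x => by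
      rw [quad, add_mul]; linarith [dotProduct_mulVec_le_maxEig hA x]
  have hmax_ge : maxEig hA ≤ maxEig hM - c :=
    maxEig_le_of_forall_dotProduct_mulVec_le hA fun x => by
      rw [sub_mul]; linarith [quad x, dotProduct_mulVec_le_maxEig hM x]
  have hmin_le : minEig hM - c ≤ minEig hA :=
    le_minEig_of_forall_le_dotProduct_mulVec hA fun x => by
      rw [sub_mul]; linarith [quad x, minEig_le_dotProduct_mulVec hM x]
  have hmin_ge : minEig hA + c ≤ minEig hM :=
    le_minEig_of_forall_le_dotProduct_mulVec hM fun x => by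
      rw [quad, add_mul]; linarith [minEig_le_dotProduct_mulVec hA x]
  rw [sprd, sprd]
  linarith

end Spectral

section Gram

variable {α β : Type*} [Fintype α] [Fintype β] [DecidableEq β] (B : Matrix α β ℝ)
  {M : Matrix β β ℝ}

lemma maxEig_le_of_transpose_mul_self [DecidableEq α] [Nonempty α] [Nonempty β]
    {N : Matrix α α ℝ} (hM : M.IsHermitian) (hN : N.IsHermitian) (hBM : Bᵀ * B = M)
    (hBN : B * Bᵀ = N) : maxEig hM ≤ maxEig hN := by
  have hN_nonneg : 0 ≤ maxEig hN := by
    have hN_psd : N.PosSemidef := by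
      simpa [hBN] using posSemidef_self_mul_conjTranspose B
    obtain ⟨i⟩ := ‹Nonempty α›
    exact (hN_psd.eigenvalues_nonneg i).trans (eigenvalues_le_maxEig hN i)
  rcases le_or_gt (maxEig hM) 0 with hM_nonpos | hM_pos
  · linarith
  obtain ⟨x, hx, hMx⟩ := exists_mulVec_eq_maxEig_smul hM
  have hBx : B *ᵥ x ≠ 0 := fun h0 => by
    have : maxEig hM • x = 0 := by rw [← hMx, ← hBM, ← mulVec_mulVec, h0, mulVec_zero]
    exact hx ((smul_eq_zero.mp this).resolve_left hM_pos.ne')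
  refine le_maxEig_of_mulVec_eq_smul hN hBx ?_
  rw [← hBN, mulVec_mulVec, Matrix.mul_assoc, ← mulVec_mulVec, hBM, hMx, mulVec_smul]

lemma maxEig_eq_of_transpose_mul_self [DecidableEq α] [Nonempty α] [Nonempty β]
    {N : Matrix α α ℝ} (hM : M.IsHermitian) (hN : N.IsHermitian) (hBM : Bᵀ * B = M)
    (hBN : B * Bᵀ = N) : maxEig hM = maxEig hN :=
  le_antisymm (maxEig_le_of_transpose_mul_self B hM hN hBM hBN)
    (maxEig_le_of_transpose_mul_self Bᵀ hN hM (by rwa [transpose_transpose])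
      (by rwa [transpose_transpose]))

lemma minEig_eq_zero_of_transpose_mul_self (hM : M.IsHermitian) (hBM : Bᵀ * B = M)
    (hcard : Fintype.card α < Fintype.card β) : minEig hM = 0 := by
  have : Nonempty β := Fintype.card_pos_iff.mp (by omega)
  have hM_psd : M.PosSemidef := by
    simpa [hBM] using posSemidef_conjTranspose_mul_self B
  refine le_antisymm ?_ (le_ciInf hM_psd.eigenvalues_nonneg)
  obtain ⟨x, hx, hMx⟩ : ∃ x ≠ 0, M *ᵥ x = 0 := exists_mulVec_eq_zero_iff.mpr <| by
    by_contra hdet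
    have hrank := rank_of_isUnit M ((isUnit_iff_isUnit_det M).mpr (Ne.isUnit hdet))
    have := (rank_mul_le_left Bᵀ B).trans (rank_le_card_width Bᵀ)
    rw [hBM] at this
    omega
  exact minEig_le_of_mulVec_eq_smul hM hx (by rw [hMx, zero_smul])

end Gram

section Nonneg

variable {ι : Type*} [Fintype ι] {A : Matrix ι ι ℝ}

lemma dotProduct_abs_self (x : ι → ℝ) : |x| ⬝ᵥ |x| = x ⬝ᵥ x := by
  simp [dotProduct, abs_mul_abs_self]

lemma abs_dotProduct_mulVec_le (hA : ∀ i j, 0 ≤ A i j) (x : ι → ℝ) :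
    |x ⬝ᵥ (A *ᵥ x)| ≤ |x| ⬝ᵥ (A *ᵥ |x|) := by
  simp only [dotProduct, mulVec, Pi.abs_apply]
  refine (Finset.abs_sum_le_sum_abs _ _).trans (Finset.sum_le_sum fun i _ => ?_)
  rw [abs_mul]
  gcongr
  refine (Finset.abs_sum_le_sum_abs _ _).trans (le_of_eq (Finset.sum_congr rfl fun j _ => ?_))
  rw [abs_mul, abs_of_nonneg (hA i j)]

lemma mul_nonpos_of_dotProduct_mulVec_eq_neg (hA : ∀ i j, 0 ≤ A i j) {x : ι → ℝ}
    (h : x ⬝ᵥ (A *ᵥ x) = -(|x| ⬝ᵥ (A *ᵥ |x|))) {i j : ι} (hij : 0 < A i j) : x i * x j ≤ 0 := by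
  have factor : ∀ i j, x i * (A i j * x j) + |x i| * (A i j * |x j|)
      = A i j * (x i * x j + |x i * x j|) := fun i j => by rw [abs_mul]; ring
  have term_nonneg : ∀ i j, 0 ≤ x i * (A i j * x j) + |x i| * (A i j * |x j|) := fun i j => by
    rw [factor]
    exact mul_nonneg (hA i j) (by linarith [neg_abs_le (x i * x j)])
  have hsum := add_eq_zero_iff_eq_neg.mpr h
  simp only [dotProduct, mulVec, Pi.abs_apply, Finset.mul_sum, ← Finset.sum_add_distrib] at hsum
  have hterm := (Finset.sum_eq_zero_iff_of_nonneg fun j _ => term_nonneg i j).mp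
    ((Finset.sum_eq_zero_iff_of_nonneg fun i _ =>
      Finset.sum_nonneg fun j _ => term_nonneg i j).mp hsum i (Finset.mem_univ i))
    j (Finset.mem_univ j)
  rw [factor, mul_eq_zero, or_iff_right hij.ne'] at hterm
  linarith [abs_nonneg (x i * x j)]

variable [DecidableEq ι]

lemma neg_minEig_le_maxEig (hA : A.IsHermitian) (hA₀ : ∀ i j, 0 ≤ A i j) [Nonempty ι] :
    -minEig hA ≤ maxEig hA := by
  obtain ⟨x, hx, hAx⟩ := exists_mulVec_eq_minEig_smul hA
  have h : -minEig hA * (x ⬝ᵥ x) ≤ maxEig hA * (x ⬝ᵥ x) :=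
    calc -minEig hA * (x ⬝ᵥ x) = -(x ⬝ᵥ (A *ᵥ x)) := by
          rw [hAx, dotProduct_smul, smul_eq_mul]; ring
      _ ≤ |x| ⬝ᵥ (A *ᵥ |x|) := (neg_le_abs _).trans (abs_dotProduct_mulVec_le hA₀ x)
      _ ≤ maxEig hA * (x ⬝ᵥ x) := by
          rw [← dotProduct_abs_self x]; exact dotProduct_mulVec_le_maxEig hA _
  exact le_of_mul_le_mul_right h (dotProduct_self_pos hx)

lemma dotProduct_abs_mulVec_abs_eq_maxEig (hA : A.IsHermitian) (hA₀ : ∀ i j, 0 ≤ A i j)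
    {x : ι → ℝ} (h : maxEig hA * (x ⬝ᵥ x) ≤ |x ⬝ᵥ (A *ᵥ x)|) :
    |x| ⬝ᵥ (A *ᵥ |x|) = maxEig hA * (|x| ⬝ᵥ |x|) :=
  le_antisymm (dotProduct_mulVec_le_maxEig hA _)
    (by rw [dotProduct_abs_self]; exact h.trans (abs_dotProduct_mulVec_le hA₀ x))

end Nonneg

lemma SimpleGraph.colorable_two_of_forall_adj_mul_neg {W : Type*} {G : SimpleGraph W}
    {y : W → ℝ} (h : ∀ u v, G.Adj u v → y u * y v < 0) : G.Colorable 2 :=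
  (SimpleGraph.Coloring.mk (fun v => decide (0 < y v)) fun {u v} huv => by
    have huv := h u v huv
    simp only [ne_eq, decide_eq_decide]
    intro hsign
    by_cases hu : 0 < y u
    · linarith [mul_pos hu (hsign.mp hu)]
    · have hv : ¬ 0 < y v := hsign.not.mp hu
      linarith [mul_nonneg_of_nonpos_of_nonpos (not_lt.mp hu) (not_lt.mp hv)]).colorable

section Graph

variable (G : SimpleGraph V)

lemma adjMat_eq_adjMatrix [DecidableRel G.Adj] : adjMat G = G.adjMatrix ℝ := by
  unfold adjMat; congr

lemma adjMat_nonneg (u v : V) : 0 ≤ adjMat G u v := by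
  classical
  rw [adjMat_eq_adjMatrix, SimpleGraph.adjMatrix_apply]
  split_ifs <;> norm_num

variable [Fintype V]

lemma deg_eq_degree [DecidableRel G.Adj] (v : V) : deg G v = G.degree v := by
  unfold deg; convert rfl

variable [DecidableEq V]

lemma lap_eq_lapMatrix [DecidableRel G.Adj] : lap G = G.lapMatrix ℝ := by
  simp only [lap, SimpleGraph.lapMatrix, SimpleGraph.degMatrix, deg_eq_degree,
    adjMat_eq_adjMatrix]

lemma posSemidef_lap : (lap G).PosSemidef := by
  classical
  rw [lap_eq_lapMatrix]
  exact SimpleGraph.posSemidef_lapMatrix ℝ G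

lemma signQ_eq_lap_add : signQ G = lap G + (2 : ℝ) • adjMat G := by
  rw [signQ, lap, two_smul]
  abel

lemma signQ_eq_of_isReg {r : ℕ} (hG : IsReg G r) : signQ G = (2 * r : ℝ) • 1 - lap G := by
  rw [signQ, lap, show (fun v => (deg G v : ℝ)) = fun _ => (r : ℝ) from funext fun v => by
    rw [hG v], ← smul_one_eq_diagonal, mul_smul, two_smul]
  abel

lemma dotProduct_signQ_mulVec (x : V → ℝ) :
    x ⬝ᵥ (signQ G *ᵥ x) = x ⬝ᵥ (lap G *ᵥ x) + 2 * (x ⬝ᵥ (adjMat G *ᵥ x)) := by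
  rw [signQ_eq_lap_add, add_mulVec, smul_mulVec, dotProduct_add, dotProduct_smul, smul_eq_mul]

lemma forall_eq_of_dotProduct_lap_eq_zero (hG : G.Connected) {x : V → ℝ}
    (hx : x ⬝ᵥ (lap G *ᵥ x) = 0) (u v : V) : x u = x v := by
  classical
  rw [lap_eq_lapMatrix] at hx
  exact (SimpleGraph.lapMatrix_toLinearMap₂'_apply'_eq_zero_iff_forall_reachable G x).mp
    (by rwa [toLinearMap₂'_apply']) u v (hG.preconnected u v)

end Graph

section GraphSpectrum

variable [Fintype V] [DecidableEq V] (G : SimpleGraph V)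

lemma two_maxEig_adjMat_le_maxEig_signQ [Nonempty V] :
    2 * maxEig (adjMat_isHermitian G) ≤ maxEig (signQ_isHermitian G) := by
  obtain ⟨x, hx, hAx⟩ := exists_mulVec_eq_maxEig_smul (adjMat_isHermitian G)
  have hQ := dotProduct_mulVec_le_maxEig (signQ_isHermitian G) x
  rw [dotProduct_signQ_mulVec, hAx, dotProduct_smul, smul_eq_mul] at hQ
  have hL : 0 ≤ x ⬝ᵥ (lap G *ᵥ x) := by simpa using (posSemidef_lap G).dotProduct_mulVec_nonneg x
  exact le_of_mul_le_mul_right (by linarith) (dotProduct_self_pos hx)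

lemma forall_eq_of_maxEig_signQ_le (hG : G.Connected)
    (hq : maxEig (signQ_isHermitian G) ≤ 2 * maxEig (adjMat_isHermitian G)) {x : V → ℝ}
    (hx : x ⬝ᵥ (adjMat G *ᵥ x) = maxEig (adjMat_isHermitian G) * (x ⬝ᵥ x)) (u v : V) :
    x u = x v := by
  refine forall_eq_of_dotProduct_lap_eq_zero G hG (le_antisymm ?_ ?_) u v
  · have hQ := dotProduct_mulVec_le_maxEig (signQ_isHermitian G) x
    rw [dotProduct_signQ_mulVec, hx] at hQ
    have hxx : 0 ≤ x ⬝ᵥ x := by simpa using dotProduct_star_self_nonneg x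
    linarith [mul_le_mul_of_nonneg_right hq hxx]
  · simpa using (posSemidef_lap G).dotProduct_mulVec_nonneg x

lemma exists_isReg_of_maxEig_signQ_le (hG : G.Connected)
    (hq : maxEig (signQ_isHermitian G) ≤ 2 * maxEig (adjMat_isHermitian G)) :
    ∃ r, IsReg G r := by
  classical
  have : Nonempty V := hG.nonempty
  obtain ⟨x, hx, hAx⟩ := exists_mulVec_eq_maxEig_smul (adjMat_isHermitian G)
  have hconst := forall_eq_of_maxEig_signQ_le G hG hq (by rw [hAx, dotProduct_smul, smul_eq_mul])
  have deg_eq (u : V) : (deg G u : ℝ) = maxEig (adjMat_isHermitian G) := by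
    have hxu : x u ≠ 0 := fun h0 => hx (funext fun v => by rw [hconst v u, h0]; rfl)
    have hAxu : (adjMat G *ᵥ x) u = deg G u * x u := by
      conv_lhs => rw [show x = Function.const V (x u) from funext fun v => hconst v u,
        adjMat_eq_adjMatrix, SimpleGraph.adjMatrix_mulVec_const_apply, ← deg_eq_degree]
    have hu := congrFun hAx u
    rw [hAxu, Pi.smul_apply, smul_eq_mul] at hu
    exact mul_right_cancel₀ hxu hu
  obtain ⟨w⟩ := ‹Nonempty V›
  exact ⟨deg G w, fun v => by exact_mod_cast (deg_eq v).trans (deg_eq w).symm⟩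

lemma colorable_two_of_maxEig_signQ_le (hG : G.Connected)
    (hq : maxEig (signQ_isHermitian G) ≤ 2 * maxEig (adjMat_isHermitian G))
    (hspread : maxEig (adjMat_isHermitian G) ≤ -minEig (adjMat_isHermitian G)) :
    G.Colorable 2 := by
  classical
  have : Nonempty V := hG.nonempty
  obtain ⟨y, hy, hAy⟩ := exists_mulVec_eq_minEig_smul (adjMat_isHermitian G)
  have hyAy : y ⬝ᵥ (adjMat G *ᵥ y) = minEig (adjMat_isHermitian G) * (y ⬝ᵥ y) := by
    rw [hAy, dotProduct_smul, smul_eq_mul]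
  have hyy := mul_le_mul_of_nonneg_right hspread (dotProduct_self_pos hy).le
  have habs := dotProduct_abs_mulVec_abs_eq_maxEig (adjMat_isHermitian G) (adjMat_nonneg G)
    (x := y) (by rw [hyAy]; linarith [neg_abs_le (minEig (adjMat_isHermitian G) * (y ⬝ᵥ y))])
  have hconst := forall_eq_of_maxEig_signQ_le G hG hq habs
  obtain ⟨w, hw⟩ := Function.ne_iff.mp hy
  have hy0 (v : V) : y v ≠ 0 := fun h0 => hw <| abs_eq_zero.mp <| by
    simpa [h0] using (hconst v w).symm
  have hneg : y ⬝ᵥ (adjMat G *ᵥ y) = -(|y| ⬝ᵥ (adjMat G *ᵥ |y|)) := by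
    refine le_antisymm ?_ ?_
    · rw [habs, dotProduct_abs_self, hyAy]; linarith
    · linarith [neg_abs_le (y ⬝ᵥ (adjMat G *ᵥ y)), abs_dotProduct_mulVec_le (adjMat_nonneg G) y]
  refine SimpleGraph.colorable_two_of_forall_adj_mul_neg (y := y) fun u v huv => ?_
  have hpos : 0 < adjMat G u v := by
    rw [adjMat_eq_adjMatrix, SimpleGraph.adjMatrix_apply, if_pos huv]
    exact one_pos
  exact lt_of_le_of_ne (mul_nonpos_of_dotProduct_mulVec_eq_neg (adjMat_nonneg G) hneg hpos)
    (mul_ne_zero (hy0 u) (hy0 v))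

variable [Nonempty V] {r : ℕ}

lemma le_maxEig_of_isReg (hr : IsReg G r) : (r : ℝ) ≤ maxEig (adjMat_isHermitian G) := by
  classical
  refine le_maxEig_of_mulVec_eq_smul _ (x := Function.const V 1)
    (fun h => one_ne_zero (congrFun h (Classical.arbitrary V))) (funext fun v => ?_)
  rw [adjMat_eq_adjMatrix, SimpleGraph.adjMatrix_mulVec_const_apply, ← deg_eq_degree, hr v]
  simp

lemma minEig_le_neg_of_isReg (hr : IsReg G r) (hc : G.Colorable 2) :
    minEig (adjMat_isHermitian G) ≤ -r := by
  classical
  obtain ⟨c⟩ := hc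
  let z : V → ℝ := fun v => if c v = 0 then 1 else -1
  have hz (u v : V) (huv : G.Adj u v) : z v = -z u := by
    have := c.valid huv
    simp only [z]
    split_ifs <;> first | omega | norm_num
  refine minEig_le_of_mulVec_eq_smul _ (x := z)
    (fun h => by
      have := congrFun h (Classical.arbitrary V)
      simp only [z, Pi.zero_apply] at this
      split_ifs at this <;> norm_num at this) (funext fun u => ?_)
  rw [adjMat_eq_adjMatrix, SimpleGraph.adjMatrix_mulVec_apply,
    Finset.sum_congr rfl fun v hv => hz u v ((G.mem_neighborFinset u v).mp hv), Finset.sum_const,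
    G.card_neighborFinset_eq_degree, ← deg_eq_degree, hr u]
  simp

lemma maxEig_signQ_le_of_isReg (hr : IsReg G r) : maxEig (signQ_isHermitian G) ≤ 2 * r :=
  maxEig_le_of_forall_dotProduct_mulVec_le _ fun x => by
    have hL : 0 ≤ x ⬝ᵥ (lap G *ᵥ x) := by
      simpa using (posSemidef_lap G).dotProduct_mulVec_nonneg x
    rw [signQ_eq_of_isReg G hr, sub_mulVec, smul_mulVec, one_mulVec, dotProduct_sub,
      dotProduct_smul, smul_eq_mul]
    linarith

end GraphSpectrum

lemma Sym2.card_filter_mem_and_mem [Fintype V] [DecidableEq V] {e f : Sym2 V} (hef : e ≠ f) :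
    (Finset.univ.filter fun v => v ∈ e ∧ v ∈ f).card = if ∃ v, v ∈ e ∧ v ∈ f then 1 else 0 := by
  split_ifs with h
  · obtain ⟨w, hwe, hwf⟩ := h
    refine Finset.card_eq_one.mpr
      ⟨w, Finset.eq_singleton_iff_unique_mem.mpr ⟨by simp [hwe, hwf], ?_⟩⟩
    rintro v hv
    simp only [Finset.mem_filter, Finset.mem_univ, true_and] at hv
    by_contra hvw
    exact hef (((Sym2.mem_and_mem_iff hvw).mp ⟨hv.1, hwe⟩).trans
      ((Sym2.mem_and_mem_iff hvw).mp ⟨hv.2, hwf⟩).symm)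
  · exact Finset.card_eq_zero.mpr (Finset.filter_eq_empty_iff.mpr fun v _ hv => h ⟨v, hv⟩)

section LineGraph

variable (G : SimpleGraph V) [DecidableEq V] [DecidableRel G.Adj]

def incMat : Matrix V G.edgeSet ℝ := (G.incMatrix ℝ).submatrix id (↑)

lemma incMat_apply (v : V) (e : G.edgeSet) :
    incMat G v e = if v ∈ (e : Sym2 V) then 1 else 0 := by
  simp [incMat, SimpleGraph.incMatrix_apply', SimpleGraph.incidenceSet, e.2]

variable [Fintype V]

lemma incMat_mul_transpose : incMat G * (incMat G)ᵀ = signQ G := by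
  have h : incMat G * (incMat G)ᵀ = G.incMatrix ℝ * (G.incMatrix ℝ)ᵀ := by
    ext u v
    simp only [mul_apply, transpose_apply, incMat, submatrix_apply, id]
    rw [← Finset.sum_subtype G.edgeFinset (fun e => G.mem_edgeFinset)
      fun e => G.incMatrix ℝ u e * G.incMatrix ℝ v e]
    refine Finset.sum_subset (Finset.subset_univ _) fun e _ he => ?_
    rw [SimpleGraph.incMatrix_of_notMem_incidenceSet, zero_mul]
    exact fun h => he (G.mem_edgeFinset.mpr h.1)
  rw [h, SimpleGraph.incMatrix_mul_transpose]
  ext u v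
  by_cases huv : u = v
  · subst huv
    simp [signQ, adjMat_eq_adjMatrix, deg_eq_degree]
  · simp [signQ, adjMat_eq_adjMatrix, huv]

lemma transpose_incMat_mul : (incMat G)ᵀ * incMat G = adjMat G.lineGraph + (2 : ℝ) • 1 := by
  classical
  ext e f
  by_cases hef : e = f
  · subst hef
    rw [show ((incMat G)ᵀ * incMat G) e e = ((G.incMatrix ℝ)ᵀ * G.incMatrix ℝ) e e from rfl,
      SimpleGraph.incMatrix_transpose_mul_diag, if_pos e.2]
    simp [adjMat_eq_adjMatrix]
  · simp only [mul_apply, transpose_apply, incMat_apply, ite_zero_mul_ite_zero, one_mul,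
      Finset.sum_boole, Sym2.card_filter_mem_and_mem (Subtype.coe_injective.ne hef)]
    simp [adjMat_eq_adjMatrix, SimpleGraph.lineGraph_adj_iff_exists, one_apply_ne hef, hef]

omit [DecidableRel G.Adj] in
lemma sprd_lineGraph_eq_maxEig_signQ [Nonempty V] (hm : Fintype.card V < numEdges G) :
    sprd (adjMat_isHermitian G.lineGraph) = maxEig (signQ_isHermitian G) := by
  classical
  have hcard : Fintype.card V < Fintype.card G.edgeSet := by
    rwa [numEdges, Nat.card_eq_fintype_card] at hm
  have : Nonempty G.edgeSet := Fintype.card_pos_iff.mp (by omega)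
  have hM : ((incMat G)ᵀ * incMat G).IsHermitian := by
    simpa using (posSemidef_conjTranspose_mul_self (incMat G)).1
  rw [← sprd_eq_of_eq_add_smul_one (adjMat_isHermitian G.lineGraph) hM (transpose_incMat_mul G),
    sprd, maxEig_eq_of_transpose_mul_self (incMat G) hM (signQ_isHermitian G) rfl
      (incMat_mul_transpose G), minEig_eq_zero_of_transpose_mul_self (incMat G) hM rfl hcard,
    sub_zero]

end LineGraph

theorem spread_le_lineGraph_spread_general {V : Type*} [Fintype V] [DecidableEq V]
    (G : SimpleGraph V) (hconn : G.Connected)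
    (hmn : Fintype.card V < numEdges G) :
    sprd (adjMat_isHermitian G) ≤ sprd (adjMat_isHermitian G.lineGraph) ∧
    (sprd (adjMat_isHermitian G) = sprd (adjMat_isHermitian G.lineGraph) ↔
      (∃ r, IsReg G r) ∧ G.Colorable 2) := by
  have : Nonempty V := hconn.nonempty
  have hA₀ := neg_minEig_le_maxEig (adjMat_isHermitian G) (adjMat_nonneg G)
  have hAQ := two_maxEig_adjMat_le_maxEig_signQ G
  rw [sprd_lineGraph_eq_maxEig_signQ G hmn, sprd]
  refine ⟨by linarith, fun heq => ⟨?_, ?_⟩, fun ⟨⟨r, hr⟩, hc⟩ => ?_⟩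
  · exact exists_isReg_of_maxEig_signQ_le G hconn (by linarith)
  · exact colorable_two_of_maxEig_signQ_le G hconn (by linarith) (by linarith)
  · linarith [le_maxEig_of_isReg G hr, minEig_le_neg_of_isReg G hr hc,
      maxEig_signQ_le_of_isReg G hr]

/-- for a connected `(n,m)` graph with `m > n ≥ 4`, `S(G) ≤ S_L(G)`,
with equality iff `G` is regular and bipartite. -/
theorem spread_le_lineGraph_spread {V : Type*} [Fintype V] [DecidableEq V]
    (G : SimpleGraph V) (hconn : G.Connected) (hn : 4 ≤ Fintype.card V)
    (hmn : Fintype.card V < numEdges G) :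
    sprd (adjMat_isHermitian G) ≤ sprd (adjMat_isHermitian G.lineGraph) ∧
    (sprd (adjMat_isHermitian G) = sprd (adjMat_isHermitian G.lineGraph) ↔
      (∃ r, IsReg G r) ∧ G.Colorable 2) :=
  spread_le_lineGraph_spread_general G hconn hmn

end SpreadPaper
end
end

section
/- Suppose a symmetric n×n real matrix M is partitioned into blocks M_{ij} (1 ≤ i, j ≤ k) with M_{ij} = M_{ji}ᵀ, and let M̄ be the k×k quotient matrix whose (i,j)-entry is the average row sum of the block M_{ij}. Then the eigenvalues of M̄ interlace the eigenvalues of M; moreover, if the partition is equitable (each block has constant row sums), then every eigenvalue of M̄ is an eigenvalue of M. -/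
open Matrix Polynomial BigOperators

noncomputable section

/-! With `P` the characteristic matrix of the partition and `D` the diagonal matrix of class
sizes, the quotient matrix is `D⁻¹ Pᵀ M P`; it has the same characteristic polynomial as
`Sᵀ M S` for `S = P D^(-1/2)`, whose columns are orthonormal. Interlacing for such
compressions is the Courant–Fischer argument: the span of the top `i + 1` eigenvectors of
`Sᵀ M S` contains a nonzero `y` with `S y` orthogonal to the top `i` eigenvectors of `M`, whence
`b_i ‖y‖² ≤ ⟪y, Sᵀ M S y⟫ = ⟪S y, M S y⟫ ≤ a_i ‖y‖²`; the lower bounds are the upper bounds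
for `-M`. If the partition is equitable then `M P = P B`, and `P`, being injective, maps
eigenvectors of `B` to eigenvectors of `M`. -/

open scoped InnerProductSpace

section Rayleigh

variable {E : Type*} [NormedAddCommGroup E] [InnerProductSpace ℝ E]
  {ι : Type*} [Fintype ι] {T : E →ₗ[ℝ] E} {a : ι → ℝ}

theorem OrthonormalBasis.inner_map_self_eq_sum (v : OrthonormalBasis ι ℝ E)
    (hv : ∀ j, T (v j) = a j • v j) (x : E) :
    ⟪x, T x⟫_ℝ = ∑ j, a j * ⟪v j, x⟫_ℝ ^ 2 := by
  have hTx : T x = ∑ j, (a j * ⟪v j, x⟫_ℝ) • v j := by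
    conv_lhs => rw [← v.sum_repr' x]
    simp [map_sum, hv, smul_smul, mul_comm]
  rw [hTx, inner_sum]
  refine Finset.sum_congr rfl fun j _ => ?_
  rw [real_inner_smul_right, real_inner_comm]
  ring

theorem OrthonormalBasis.inner_map_self_le (v : OrthonormalBasis ι ℝ E)
    (hv : ∀ j, T (v j) = a j • v j) {c : ℝ} {x : E} (hx : ∀ j, c < a j → ⟪v j, x⟫_ℝ = 0) :
    ⟪x, T x⟫_ℝ ≤ c * ‖x‖ ^ 2 := by
  rw [v.inner_map_self_eq_sum hv, ← v.sum_sq_norm_inner_right, Finset.mul_sum]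
  refine Finset.sum_le_sum fun j _ => ?_
  rw [Real.norm_eq_abs, sq_abs]
  by_cases hj : c < a j
  · simp [hx j hj]
  · exact mul_le_mul_of_nonneg_right (not_lt.mp hj) (sq_nonneg _)

theorem OrthonormalBasis.le_inner_map_self (v : OrthonormalBasis ι ℝ E)
    (hv : ∀ j, T (v j) = a j • v j) {c : ℝ} {x : E} (hx : ∀ j, a j < c → ⟪v j, x⟫_ℝ = 0) :
    c * ‖x‖ ^ 2 ≤ ⟪x, T x⟫_ℝ := by
  rw [v.inner_map_self_eq_sum hv, ← v.sum_sq_norm_inner_right, Finset.mul_sum]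
  refine Finset.sum_le_sum fun j _ => ?_
  rw [Real.norm_eq_abs, sq_abs]
  by_cases hj : a j < c
  · simp [hx j hj]
  · exact mul_le_mul_of_nonneg_right (not_lt.mp hj) (sq_nonneg _)

end Rayleigh

theorem exists_ne_zero_forall_apply_eq_zero {K V : Type*} [Field K] [AddCommGroup V]
    [Module K V] [FiniteDimensional K V] {ι : Type*} [Fintype ι] (f : ι → V →ₗ[K] K)
    (h : Fintype.card ι < Module.finrank K V) : ∃ y ≠ 0, ∀ m, f m y = 0 := by
  have hker := LinearMap.ker_ne_bot_of_finrank_lt (f := LinearMap.pi f) (by simpa using h)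
  obtain ⟨y, hy, hy0⟩ := Submodule.exists_mem_ne_zero_of_ne_bot hker
  exact ⟨y, hy0, fun m => congrFun (LinearMap.mem_ker.mp hy) m⟩

section Compression

variable {E F : Type*} [NormedAddCommGroup E] [InnerProductSpace ℝ E]
  [NormedAddCommGroup F] [InnerProductSpace ℝ F] {N K : ℕ}
  {T : E →ₗ[ℝ] E} {T' : F →ₗ[ℝ] F} {J : F →ₗ[ℝ] E}
  {v : OrthonormalBasis (Fin N) ℝ E} {w : OrthonormalBasis (Fin K) ℝ F}
  {a : Fin N → ℝ} {b : Fin K → ℝ}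

theorem eigenvalue_le_of_compression (hJ : ∀ y, ‖J y‖ = ‖y‖)
    (hT' : ∀ y, ⟪y, T' y⟫_ℝ = ⟪J y, T (J y)⟫_ℝ)
    (hv : ∀ j, T (v j) = a j • v j) (hw : ∀ l, T' (w l) = b l • w l)
    (ha : Antitone a) (hb : Antitone b) (i : Fin K) (hi : (i : ℕ) < N) :
    b i ≤ a ⟨i, hi⟩ := by
  set i' : Fin N := ⟨i, hi⟩
  have : FiniteDimensional ℝ F := w.toBasis.finiteDimensional_of_finite
  -- `K - 1 - i` conditions put `y` in the span of `w 0, …, w i`, and `i` more make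
  -- `J y` orthogonal to `v 0, …, v (i - 1)`.
  obtain ⟨y, hy0, hy⟩ := exists_ne_zero_forall_apply_eq_zero
    (ι := Finset.Ioi i ⊕ Finset.Iio i')
    (Sum.elim (fun l => innerₛₗ ℝ (w l)) (fun j => (innerₛₗ ℝ (v j)).comp J))
    (by
      rw [Fintype.card_sum, Fintype.card_coe, Fintype.card_coe, Fin.card_Ioi, Fin.card_Iio,
        Module.finrank_eq_card_basis w.toBasis, Fintype.card_fin]
      simp only [i']; omega)
  have hlow : b i * ‖y‖ ^ 2 ≤ ⟪y, T' y⟫_ℝ :=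
    w.le_inner_map_self hw fun l hl => hy (Sum.inl ⟨l, Finset.mem_Ioi.mpr (hb.reflect_lt hl)⟩)
  have hup : ⟪J y, T (J y)⟫_ℝ ≤ a i' * ‖y‖ ^ 2 := by
    rw [← hJ y]
    exact v.inner_map_self_le hv fun j hj => hy (Sum.inr ⟨j, Finset.mem_Iio.mpr (ha.reflect_lt hj)⟩)
  have hy2 : 0 < ‖y‖ ^ 2 := by positivity
  exact le_of_mul_le_mul_right ((hlow.trans_eq (hT' y)).trans hup) hy2

theorem le_eigenvalue_of_compression (hJ : ∀ y, ‖J y‖ = ‖y‖)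
    (hT' : ∀ y, ⟪y, T' y⟫_ℝ = ⟪J y, T (J y)⟫_ℝ)
    (hv : ∀ j, T (v j) = a j • v j) (hw : ∀ l, T' (w l) = b l • w l)
    (ha : Antitone a) (hb : Antitone b) (hKN : K ≤ N) (i : Fin K) :
    a ⟨N - K + i, by omega⟩ ≤ b i := by
  have h := eigenvalue_le_of_compression (T := -T) (T' := -T') (v := v.reindex Fin.revPerm)
    (w := w.reindex Fin.revPerm) (a := fun j => -a j.rev) (b := fun l => -b l.rev) hJ
    (by simp [hT']) (by simp [hv]) (by simp [hw])
    (fun j j' h => neg_le_neg (ha (Fin.rev_le_rev.mpr h)))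
    (fun l l' h => neg_le_neg (hb (Fin.rev_le_rev.mpr h))) i.rev (by omega)
  have hidx : Fin.rev (⟨i.rev, by omega⟩ : Fin N) = ⟨N - K + i, by omega⟩ := by
    ext; simp only [Fin.val_rev]; omega
  rwa [hidx, Fin.rev_rev, neg_le_neg_iff] at h

end Compression

namespace Matrix

section Euclidean

variable {𝕜 : Type*} [RCLike 𝕜] {n m : Type*} [Fintype n] [DecidableEq n] [Fintype m]
  [DecidableEq m]

theorem inner_toEuclideanLin_conjTranspose_mul_mul (S : Matrix n m 𝕜) (A : Matrix n n 𝕜)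
    (y : EuclideanSpace 𝕜 m) :
    ⟪y, toEuclideanLin (Sᴴ * A * S) y⟫_𝕜 =
      ⟪toEuclideanLin S y, toEuclideanLin A (toEuclideanLin S y)⟫_𝕜 := by
  rw [toLpLin_mul_same, toLpLin_mul_same, LinearMap.comp_apply, LinearMap.comp_apply,
    toEuclideanLin_conjTranspose_eq_adjoint, LinearMap.adjoint_inner_right]

theorem norm_toEuclideanLin_of_conjTranspose_mul_self {S : Matrix n m 𝕜} (hS : Sᴴ * S = 1)
    (y : EuclideanSpace 𝕜 m) : ‖toEuclideanLin S y‖ = ‖y‖ := by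
  have h := inner_toEuclideanLin_conjTranspose_mul_mul S 1 y
  simp only [Matrix.mul_one, hS, toLpLin_one, LinearMap.id_apply,
    inner_self_eq_norm_sq_to_K] at h
  have h' : ‖toEuclideanLin S y‖ ^ 2 = ‖y‖ ^ 2 := by exact_mod_cast h.symm
  exact (pow_left_inj₀ (norm_nonneg _) (norm_nonneg _) two_ne_zero).mp h'

end Euclidean

section Spectrum

variable {K m n : Type*} [Field K] [Fintype m] [DecidableEq m] [Fintype n] [DecidableEq n]

theorem spectrum_subset_of_mul_eq_mul {A : Matrix m m K} {B : Matrix n n K} {S : Matrix m n K}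
    (hS : Function.Injective S.mulVec) (h : A * S = S * B) : spectrum K B ⊆ spectrum K A := by
  intro μ hμ
  rw [← spectrum_toLin', ← Module.End.hasEigenvalue_iff_mem_spectrum] at hμ ⊢
  obtain ⟨x, hx, hx0⟩ := hμ.exists_hasEigenvector
  refine Module.End.hasEigenvalue_of_hasEigenvector (x := S *ᵥ x) ⟨?_, ?_⟩
  · rw [Module.End.mem_eigenspace_iff, toLin'_apply] at hx ⊢
    rw [mulVec_mulVec, h, ← mulVec_mulVec, hx, mulVec_smul]
  · exact fun h0 => hx0 (hS (by rw [h0, mulVec_zero]))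

theorem mem_spectrum_of_charpoly_eq_prod {A : Matrix m m K} {ι : Type*} [Fintype ι] {q : ι → K}
    (h : A.charpoly = ∏ i, (X - C (q i))) (i : ι) : q i ∈ spectrum K A := by
  rw [mem_spectrum_iff_isRoot_charpoly, h, IsRoot, eval_prod]
  exact Finset.prod_eq_zero (Finset.mem_univ i) (by simp)

theorem IsHermitian.ofFn_eigenvalues₀_eq_of_charpoly_eq {A : Matrix m m ℝ} (hA : A.IsHermitian)
    {N : ℕ} {q : Fin N → ℝ} (hq : Antitone q) (h : A.charpoly = ∏ i, (X - C (q i))) :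
    List.ofFn hA.eigenvalues₀ = List.ofFn q := by
  rw [← hA.sort_roots_charpoly_eq_eigenvalues₀, h,
    Polynomial.roots_prod _ _ (by simp [Finset.prod_ne_zero_iff, X_sub_C_ne_zero])]
  simp only [roots_X_sub_C, Multiset.bind_singleton, Fin.univ_val_map, RCLike.re_to_real,
    Multiset.map_coe, List.map_ofFn, ge_iff_le, Multiset.coe_sort]
  refine List.mergeSort_of_pairwise ?_
  simp_rw [decide_eq_true_eq, ← List.sortedGE_iff_pairwise]
  exact hq.sortedGE_ofFn

end Spectrum

section Partition

variable {V ι : Type*} [DecidableEq ι] (R : Type*) [Semiring R] (p : V → ι)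

def partitionMatrix : Matrix V ι R := of fun u i => if p u = i then 1 else 0

variable {R p}

theorem mul_partitionMatrix_apply [Fintype V] {W : Type*} (A : Matrix W V R) (w : W) (j : ι) :
    (A * partitionMatrix R p) w j = ∑ v, if p v = j then A w v else 0 := by
  simp [partitionMatrix, mul_apply]

theorem partitionMatrix_mul_apply [Fintype ι] {W : Type*} (B : Matrix ι W R) (u : V) (j : W) :
    (partitionMatrix R p * B) u j = B (p u) j := by
  simp [partitionMatrix, mul_apply]

theorem partitionMatrix_mulVec [Fintype ι] (x : ι → R) : partitionMatrix R p *ᵥ x = x ∘ p := by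
  ext u; simp [partitionMatrix, mulVec, dotProduct]

theorem partitionMatrix_mulVec_injective [Fintype ι] (hp : Function.Surjective p) :
    Function.Injective (partitionMatrix R p).mulVec := fun x y hxy => by
  rw [partitionMatrix_mulVec, partitionMatrix_mulVec] at hxy
  exact hp.injective_comp_right hxy

theorem partitionMatrix_transpose_mul_mul_apply [Fintype V] (A : Matrix V V R) (i j : ι) :
    ((partitionMatrix R p)ᵀ * A * partitionMatrix R p) i j =
      ∑ u, ∑ v, if p u = i ∧ p v = j then A u v else 0 := by
  simp_rw [mul_apply, Finset.sum_mul]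
  rw [Finset.sum_comm]
  refine Finset.sum_congr rfl fun u _ => Finset.sum_congr rfl fun v _ => ?_
  simp only [partitionMatrix, transpose_apply, of_apply, ite_and]
  split_ifs <;> simp

theorem partitionMatrix_transpose_mul_self [Fintype V] :
    (partitionMatrix R p)ᵀ * partitionMatrix R p =
      diagonal fun i => (Fintype.card {u // p u = i} : R) := by
  ext i j
  rw [mul_apply, diagonal_apply]
  split_ifs with hij
  · subst hij
    rw [Fintype.card_subtype, ← Finset.sum_boole]
    refine Finset.sum_congr rfl fun u _ => ?_
    by_cases h : p u = i <;> simp [partitionMatrix, h]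
  · refine Finset.sum_eq_zero fun u _ => ?_
    simp only [partitionMatrix, transpose_apply, of_apply]
    grind

end Partition

section Quotient

variable {V ι : Type*} [Fintype V] [Fintype ι] [DecidableEq ι] (p : V → ι)

def quotientMatrix (A : Matrix V V ℝ) : Matrix ι ι ℝ :=
  diagonal (fun i => (Fintype.card {u // p u = i} : ℝ)⁻¹) *
    ((partitionMatrix ℝ p)ᵀ * A * partitionMatrix ℝ p)

def normalizedPartitionMatrix : Matrix V ι ℝ :=
  partitionMatrix ℝ p * diagonal fun i => (√(Fintype.card {u // p u = i}))⁻¹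

variable {p}

theorem quotientMatrix_apply (A : Matrix V V ℝ) (i j : ι) :
    quotientMatrix p A i j =
      (∑ u, ∑ v, if p u = i ∧ p v = j then A u v else 0) / (Fintype.card {u // p u = i} : ℝ) := by
  rw [quotientMatrix, diagonal_mul, partitionMatrix_transpose_mul_mul_apply, div_eq_inv_mul]

theorem normalizedPartitionMatrix_conjTranspose :
    (normalizedPartitionMatrix p)ᴴ =
      (diagonal fun i => (√(Fintype.card {u // p u = i}))⁻¹) * (partitionMatrix ℝ p)ᵀ := by
  simp [normalizedPartitionMatrix, conjTranspose_eq_transpose_of_trivial]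

theorem normalizedPartitionMatrix_conjTranspose_mul_self (hp : Function.Surjective p) :
    (normalizedPartitionMatrix p)ᴴ * normalizedPartitionMatrix p = 1 := by
  rw [normalizedPartitionMatrix_conjTranspose, normalizedPartitionMatrix, Matrix.mul_assoc,
    ← Matrix.mul_assoc (partitionMatrix ℝ p)ᵀ, partitionMatrix_transpose_mul_self,
    diagonal_mul_diagonal, diagonal_mul_diagonal, ← diagonal_one]
  congr 1; ext i
  have hn : (0 : ℝ) < Fintype.card {u // p u = i} :=
    Nat.cast_pos.mpr (Fintype.card_pos_iff.mpr ⟨⟨_, (hp i).choose_spec⟩⟩)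
  rw [mul_left_comm, ← mul_inv, Real.mul_self_sqrt hn.le, mul_inv_cancel₀ hn.ne']

theorem charpoly_normalizedPartitionMatrix_conj (A : Matrix V V ℝ) :
    ((normalizedPartitionMatrix p)ᴴ * A * normalizedPartitionMatrix p).charpoly =
      (quotientMatrix p A).charpoly := by
  set D := diagonal fun i => (√(Fintype.card {u // p u = i} : ℝ))⁻¹
  set Q := (partitionMatrix ℝ p)ᵀ * A * partitionMatrix ℝ p
  have hDD : D * D = diagonal fun i => (Fintype.card {u // p u = i} : ℝ)⁻¹ := by
    rw [diagonal_mul_diagonal]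
    simp_rw [← mul_inv, Real.mul_self_sqrt (Nat.cast_nonneg _)]
  calc ((normalizedPartitionMatrix p)ᴴ * A * normalizedPartitionMatrix p).charpoly
      _ = (D * (Q * D)).charpoly := by
        rw [normalizedPartitionMatrix_conjTranspose]
        simp only [normalizedPartitionMatrix, D, Q, Matrix.mul_assoc]
      _ = (Q * D * D).charpoly := charpoly_mul_comm _ _
      _ = (quotientMatrix p A).charpoly := by
        rw [Matrix.mul_assoc, hDD, charpoly_mul_comm, quotientMatrix]

end Quotient

end Matrix

namespace SpreadPaper

variable {m : Type*} [Fintype m] [DecidableEq m] {A : Matrix m m ℝ} {K : ℕ} {q : Fin K → ℝ}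

theorem IsDescSpectrum.exists_orthonormalBasis {hA : A.IsHermitian} (hq : IsDescSpectrum hA q) :
    ∃ v : OrthonormalBasis (Fin K) ℝ (EuclideanSpace ℝ m),
      ∀ j, toEuclideanLin A (v j) = q j • v j := by
  obtain ⟨-, e, he⟩ := hq
  refine ⟨hA.eigenvectorBasis.reindex e.symm, fun j => ?_⟩
  simp [toLpLin_apply, hA.mulVec_eigenvectorBasis, he]

theorem IsDescSpectrum.exists_eq_of_mem_spectrum {hA : A.IsHermitian} (hq : IsDescSpectrum hA q)
    {μ : ℝ} (hμ : μ ∈ spectrum ℝ A) : ∃ j, q j = μ := by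
  obtain ⟨-, e, he⟩ := hq
  obtain ⟨t, rfl⟩ := hA.spectrum_real_eq_range_eigenvalues ▸ hμ
  exact ⟨e.symm t, by rw [he, e.apply_symm_apply]⟩

theorem isDescSpectrum_eigenvalues₀ (hA : A.IsHermitian) : IsDescSpectrum hA hA.eigenvalues₀ :=
  ⟨hA.eigenvalues₀_antitone, Fintype.equivOfCardEq (Fintype.card_fin _),
    fun j => by simp [Matrix.IsHermitian.eigenvalues]⟩

theorem isDescSpectrum_of_charpoly_eq (hA : A.IsHermitian) (hq : Antitone q)
    (h : A.charpoly = ∏ i, (X - C (q i))) : IsDescSpectrum hA q := by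
  obtain ⟨rfl, hq⟩ := Sigma.mk.inj_iff.mp
    (List.ofFn_inj'.mp (hA.ofFn_eigenvalues₀_eq_of_charpoly_eq hq h).symm)
  rw [eq_of_heq hq]
  exact isDescSpectrum_eigenvalues₀ hA

theorem IsDescSpectrum.interlace {n : Type*} [Fintype n] [DecidableEq n] {M : Matrix n n ℝ}
    {hM : M.IsHermitian} {S : Matrix n m ℝ} (hS : Sᴴ * S = 1) {hC : (Sᴴ * M * S).IsHermitian}
    {N : ℕ} {a : Fin N → ℝ} {b : Fin K → ℝ} (ha : IsDescSpectrum hM a)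
    (hb : IsDescSpectrum hC b) (hKN : K ≤ N) (i : Fin K) :
    b i ≤ a ⟨i, lt_of_lt_of_le i.2 hKN⟩ ∧ a ⟨N - K + i, by omega⟩ ≤ b i := by
  obtain ⟨v, hv⟩ := ha.exists_orthonormalBasis
  obtain ⟨w, hw⟩ := hb.exists_orthonormalBasis
  have hJ := norm_toEuclideanLin_of_conjTranspose_mul_self hS
  have hT' := inner_toEuclideanLin_conjTranspose_mul_mul S M
  exact ⟨eigenvalue_le_of_compression hJ hT' hv hw ha.1 hb.1 i _,
    le_eigenvalue_of_compression hJ hT' hv hw ha.1 hb.1 hKN i⟩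

/-- Haemers: the eigenvalues of the quotient matrix of a partitioned
symmetric matrix interlace the eigenvalues of the matrix; if the partition is equitable,
every eigenvalue of the quotient matrix is an eigenvalue of the matrix. -/
theorem quotient_matrix_interlacing {V : Type*} [Fintype V] [DecidableEq V] {k : ℕ}
    {M : Matrix V V ℝ} (hM : M.IsHermitian)
    (p : V → Fin k) (hp : Function.Surjective p) (hk : k ≤ Fintype.card V)
    (B : Matrix (Fin k) (Fin k) ℝ)
    (hB : ∀ i j, B i j =
      (∑ u : V, ∑ v : V, if p u = i ∧ p v = j then M u v else 0) /
        (Fintype.card {u : V // p u = i} : ℝ))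
    (b : Fin k → ℝ) (hbmono : Antitone b)
    (hb : B.charpoly = ∏ i : Fin k, (Polynomial.X - Polynomial.C (b i)))
    (a : Fin (Fintype.card V) → ℝ) (ha : IsDescSpectrum hM a) :
    (∀ i : Fin k,
        b i ≤ a ⟨i, lt_of_lt_of_le i.2 hk⟩ ∧
        a ⟨Fintype.card V - k + i, by omega⟩ ≤ b i) ∧
    ((∀ (i j : Fin k) (u : V), p u = i →
        (∑ v : V, if p v = j then M u v else 0) = B i j) →
      ∀ i : Fin k, ∃ j : Fin (Fintype.card V), a j = b i) := by
  have hBq : B = quotientMatrix p M := by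
    ext i j
    rw [hB, quotientMatrix_apply]
  have hC := isHermitian_conjTranspose_mul_mul (normalizedPartitionMatrix p) hM
  have hbC : IsDescSpectrum hC b := isDescSpectrum_of_charpoly_eq hC hbmono
    (by rw [charpoly_normalizedPartitionMatrix_conj, ← hBq, hb])
  refine ⟨ha.interlace (normalizedPartitionMatrix_conjTranspose_mul_self hp) hbC hk, ?_⟩
  intro hequitable i
  have hMP : M * partitionMatrix ℝ p = partitionMatrix ℝ p * B := by
    ext u j
    rw [mul_partitionMatrix_apply, partitionMatrix_mul_apply, hequitable _ _ u rfl]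
  exact ha.exists_eq_of_mem_spectrum (spectrum_subset_of_mul_eq_mul
    (partitionMatrix_mulVec_injective hp) hMP (mem_spectrum_of_charpoly_eq_prod hb i))

end SpreadPaper
end
end
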